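/- arXiv:1405.5716 — 3 statements merged into one kernel-verified Lean document; each statement's English description precedes it below -/
import Mathlib

section
/- Let n ≥ 2 be a natural number, a > 0, Λ > 0 real numbers, ε ∈ {−1, 1}, and let r ≥ −εΛ/(a(n−1)) + √(π²/a + Λ²/(a²(n−1)²)). Let R : ℝ → ℝ be continuous on [0, r] with R(t) ≤ (n−1)a for all t ∈ [0, r] and ∫₀^r R(t) dt ≥ a(n−1)r + εΛ. Then ∫₀^r [ (n−1)(π/r)² cos²(πt/r) − R(t) sin²(πt/r) ] dt ≤ 0. -/
open Real intervalIntegral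

lemma cos_sq_integral_aux (r : ℝ) (hr : 0 < r) :
    ∫ t in (0 : ℝ)..r, Real.cos (π * t / r) ^ 2 = r / 2 := by
  have hc : (π / r) ≠ 0 := by positivity
  have h1 : ∀ t : ℝ, π * t / r = (π / r) * t := by intro t; ring
  simp_rw [h1]
  rw [intervalIntegral.integral_comp_mul_left (fun x => Real.cos x ^ 2) hc]
  have h2 : (π / r) * r = π := by field_simp
  rw [mul_zero, h2, integral_cos_sq]
  simp [Real.sin_pi, Real.cos_pi]
  field_simp

set_option maxHeartbeats 1000000 in
theorem theoremA_analytic_core (n : ℕ) (hn : 2 ≤ n) (a Λ ε r : ℝ)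
    (ha : 0 < a) (hΛ : 0 < Λ) (hε : ε = -1 ∨ ε = 1)
    (hr : -ε * Λ / (a * ((n : ℝ) - 1))
        + Real.sqrt (π ^ 2 / a + Λ ^ 2 / (a ^ 2 * ((n : ℝ) - 1) ^ 2)) ≤ r)
    (R : ℝ → ℝ) (hRcont : ContinuousOn R (Set.Icc 0 r))
    (hRle : ∀ t ∈ Set.Icc (0 : ℝ) r, R t ≤ ((n : ℝ) - 1) * a)
    (hRint : a * ((n : ℝ) - 1) * r + ε * Λ ≤ ∫ t in (0 : ℝ)..r, R t) :
    (∫ t in (0 : ℝ)..r,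
        (((n : ℝ) - 1) * (π / r) ^ 2 * Real.cos (π * t / r) ^ 2
          - R t * Real.sin (π * t / r) ^ 2)) ≤ 0 := by
  set m : ℝ := (n : ℝ) - 1 with hm_def
  have hm : (1 : ℝ) ≤ m := by
    have h2 : (2 : ℝ) ≤ (n : ℝ) := by exact_mod_cast hn
    simp only [hm_def]; linarith
  have hm0 : 0 < m := by linarith
  clear_value m
  have hams : 0 < a * m := by positivity
  have hε2 : ε ^ 2 = 1 := by rcases hε with h | h <;> simp [h]
  set s : ℝ := Real.sqrt (π ^ 2 / a + Λ ^ 2 / (a ^ 2 * m ^ 2)) with hs_def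
  have hs_nonneg : 0 ≤ s := Real.sqrt_nonneg _
  have hs_sq : s ^ 2 = π ^ 2 / a + Λ ^ 2 / (a ^ 2 * m ^ 2) := by
    rw [hs_def, Real.sq_sqrt]; positivity
  clear_value s
  have hπ : (0 : ℝ) < π := Real.pi_pos
  have hεΛ : ε * Λ ≤ Λ := by rcases hε with h | h <;> simp [h] <;> linarith
  -- r > 0
  have hΛam : 0 < Λ / (a * m) := div_pos hΛ hams
  have hsq' : s ^ 2 = π ^ 2 / a + (Λ / (a * m)) ^ 2 := by
    rw [hs_sq, div_pow, mul_pow]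
  have hgt : Λ / (a * m) < s := by
    nlinarith [div_pos (pow_pos hπ 2) ha, hs_nonneg]
  have h5 : -Λ / (a * m) ≤ -ε * Λ / (a * m) := by
    rw [div_le_div_iff₀ hams hams]
    nlinarith [mul_nonneg (by linarith : (0:ℝ) ≤ Λ - ε * Λ) hams.le]
  have hrpos : 0 < r := by
    have : -Λ / (a * m) + s ≤ r := le_trans (by linarith) hr
    have hneg : -Λ / (a * m) = -(Λ / (a * m)) := by ring
    rw [hneg] at this
    linarith
  -- quadratic inequality
  have hquad : m * π ^ 2 ≤ a * m * r ^ 2 + 2 * ε * Λ * r := by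
    set x : ℝ := ε * Λ / (a * m) with hx_def
    have hx2 : (a * m) * x = ε * Λ := by rw [hx_def]; field_simp
    have h1 : 0 ≤ r + x - s := by
      have : -ε * Λ / (a * m) = -x := by rw [hx_def]; ring
      rw [this] at hr; linarith
    have h2 : 0 ≤ r + x + s := by linarith
    have key : 0 ≤ (r + x) ^ 2 - s ^ 2 := by nlinarith [mul_nonneg h1 h2]
    have key2 : 0 ≤ (a * m) ^ 2 * ((r + x) ^ 2 - s ^ 2) :=
      mul_nonneg (sq_nonneg _) key
    have e1 : (a * m) ^ 2 * (r + x) ^ 2 = (a * m * r + ε * Λ) ^ 2 := by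
      rw [← hx2]; ring
    have key3 : 0 ≤ (a * m * r + ε * Λ) ^ 2 - (a * m) ^ 2 * s ^ 2 := by
      nlinarith [key2, e1]
    have hs2' : (a * m) ^ 2 * s ^ 2 = a * m ^ 2 * π ^ 2 + Λ ^ 2 := by
      rw [hs_sq]; field_simp
    nlinarith [key3, hs2', hε2, hams]
  -- integrability
  have huIcc : Set.uIcc (0 : ℝ) r = Set.Icc 0 r := Set.uIcc_of_le hrpos.le
  have hRI : IntervalIntegrable R MeasureTheory.volume 0 r := by
    apply ContinuousOn.intervalIntegrable; rwa [huIcc]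
  have hcosc : Continuous fun t : ℝ => Real.cos (π * t / r) ^ 2 := by fun_prop
  have hRcosI : IntervalIntegrable (fun t => R t * Real.cos (π * t / r) ^ 2)
      MeasureTheory.volume 0 r := by
    apply ContinuousOn.intervalIntegrable
    rw [huIcc]; exact hRcont.mul hcosc.continuousOn
  have hcosI : IntervalIntegrable (fun t => m * (π / r) ^ 2 * Real.cos (π * t / r) ^ 2)
      MeasureTheory.volume 0 r := (continuous_const.mul hcosc).intervalIntegrable _ _
  -- split the integral
  have hsplit : (∫ t in (0 : ℝ)..r,
        (m * (π / r) ^ 2 * Real.cos (π * t / r) ^ 2 - R t * Real.sin (π * t / r) ^ 2))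
      = m * (π / r) ^ 2 * (∫ t in (0 : ℝ)..r, Real.cos (π * t / r) ^ 2)
        + ((∫ t in (0 : ℝ)..r, R t * Real.cos (π * t / r) ^ 2)
            - ∫ t in (0 : ℝ)..r, R t) := by
    rw [← intervalIntegral.integral_const_mul, ← intervalIntegral.integral_sub hRcosI hRI,
      ← intervalIntegral.integral_add hcosI (hRcosI.sub hRI)]
    congr 1; funext t
    have hpyth := Real.sin_sq_add_cos_sq (π * t / r)
    linear_combination (-(R t)) * hpyth
  have hcosval := cos_sq_integral_aux r hrpos
  -- bound ∫ R cos²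
  have hRcosle : (∫ t in (0 : ℝ)..r, R t * Real.cos (π * t / r) ^ 2)
      ≤ m * a * (r / 2) := by
    have hconstI : IntervalIntegrable (fun t => m * a * Real.cos (π * t / r) ^ 2)
        MeasureTheory.volume 0 r := (continuous_const.mul hcosc).intervalIntegrable _ _
    have hmono := intervalIntegral.integral_mono_on hrpos.le hRcosI hconstI
      (fun t ht => mul_le_mul_of_nonneg_right (hRle t ht) (sq_nonneg _))
    calc (∫ t in (0 : ℝ)..r, R t * Real.cos (π * t / r) ^ 2)
        ≤ ∫ t in (0 : ℝ)..r, m * a * Real.cos (π * t / r) ^ 2 := hmono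
      _ = m * a * (r / 2) := by rw [intervalIntegral.integral_const_mul, hcosval]
  -- conclude
  rw [hsplit, hcosval]
  have h2r : (0 : ℝ) < 2 * r := by linarith
  have hdiv : m * (π / r) ^ 2 * (r / 2) ≤ m * a * r / 2 + ε * Λ := by
    rw [div_pow]
    rw [show m * (π ^ 2 / r ^ 2) * (r / 2) = m * π ^ 2 / (2 * r) by
      field_simp]
    rw [div_le_iff₀ h2r]
    nlinarith [hquad]
  linarith [hRcosle, hRint, hdiv]
end

section
/- Let n ≥ 2 be a natural number, a > 0 and Λ ≥ 0 real numbers, and let r ≥ Λ/(a(n−1)) + √(π²/a + Λ²/(a²(n−1)²)). Let f : ℝ → ℝ be continuously differentiable on [0, r] with |f(t)| ≤ Λ/π for all t ∈ [0, r], and let R : ℝ → ℝ be continuous on [0, r] with R(t) ≥ (n−1)a + f′(t) for all t ∈ [0, r]. Then ∫₀^r [ (n−1)(π/r)² cos²(πt/r) − R(t) sin²(πt/r) ] dt ≤ 0. -/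
open Real intervalIntegral

/-!
For the test field `sin (π t / r)` on `[0, r]` one has `∫ cos² = ∫ sin² = r / 2`. Integrating
`f' · sin²` by parts moves the derivative onto `sin²`, which vanishes at both endpoints and has
derivative of size at most `π / r`; with `|f| ≤ Λ / π` this costs at most `Λ`. Hence the integral is
at most `(n - 1) (π² / r - a r) / 2 + Λ`, which is `≤ 0` exactly when `r` lies beyond the positive
root `Λ / (a (n - 1)) + √(π² / a + Λ² / (a² (n - 1)²))` of `(n - 1) a x² - 2 Λ x - (n - 1) π²`.
-/

theorem integral_comp_pi_mul_div (g : ℝ → ℝ) (r : ℝ) :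
    ∫ t in (0 : ℝ)..r, g (π * t / r) = r / π * ∫ x in (0 : ℝ)..π, g x := by
  rcases eq_or_ne r 0 with rfl | hr
  · simp
  have hdiv : ∀ t, π * t / r = t / (r / π) := fun t => by field_simp
  simp_rw [hdiv, integral_comp_div g (div_ne_zero hr pi_ne_zero), zero_div, div_div_cancel₀ hr,
    smul_eq_mul]

theorem integral_sin_sq_pi_mul_div (r : ℝ) : ∫ t in (0 : ℝ)..r, sin (π * t / r) ^ 2 = r / 2 := by
  rw [integral_comp_pi_mul_div (fun x => sin x ^ 2), integral_sin_sq, sin_pi, sin_zero]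
  field_simp
  ring

theorem integral_cos_sq_pi_mul_div (r : ℝ) : ∫ t in (0 : ℝ)..r, cos (π * t / r) ^ 2 = r / 2 := by
  rw [integral_comp_pi_mul_div (fun x => cos x ^ 2), integral_cos_sq, sin_pi, sin_zero]
  field_simp
  ring

theorem hasDerivAt_sin_sq_pi_mul_div (r t : ℝ) :
    HasDerivAt (fun t => sin (π * t / r) ^ 2) (π / r * sin (2 * (π * t / r))) t := by
  refine ((((hasDerivAt_id t).const_mul π).div_const r).sin.fun_pow 2).congr_deriv ?_
  simp only [id, sin_two_mul]
  push_cast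
  ring

theorem abs_integral_deriv_mul_sin_sq_pi_mul_div_le {f f' : ℝ → ℝ} {r M : ℝ} (hr : 0 < r)
    (hf : ∀ t ∈ Set.Icc 0 r, HasDerivAt f (f' t) t)
    (hf' : IntervalIntegrable f' MeasureTheory.volume 0 r)
    (hfM : ∀ t ∈ Set.Icc 0 r, |f t| ≤ M) :
    |∫ t in 0..r, f' t * sin (π * t / r) ^ 2| ≤ π * M := by
  rw [← Set.uIcc_of_le hr.le] at hf hfM
  have hv' : Continuous fun t => π / r * sin (2 * (π * t / r)) := by fun_prop
  have hibp := integral_mul_deriv_eq_deriv_mul hf (fun t _ => hasDerivAt_sin_sq_pi_mul_div r t)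
    hf' (hv'.intervalIntegrable 0 r)
  have hend : sin (π * r / r) = 0 := by rw [mul_div_cancel_right₀ _ hr.ne']; exact sin_pi
  have hbound : ∀ t ∈ Set.uIoc 0 r, ‖f t * (π / r * sin (2 * (π * t / r)))‖ ≤ M * (π / r) := by
    intro t ht
    have hfMt := hfM t (Set.uIoc_subset_uIcc ht)
    rw [Real.norm_eq_abs, abs_mul, abs_mul, abs_of_pos (div_pos pi_pos hr)]
    exact mul_le_mul hfMt (mul_le_of_le_one_right (by positivity) (abs_sin_le_one _))
      (by positivity) ((abs_nonneg _).trans hfMt)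
  calc |∫ t in 0..r, f' t * sin (π * t / r) ^ 2|
      = |∫ t in 0..r, f t * (π / r * sin (2 * (π * t / r)))| := by
        rw [hibp, hend, mul_zero, zero_div, sin_zero]; simp
    _ ≤ M * (π / r) * |r - 0| := norm_integral_le_of_norm_le_const hbound
    _ = π * M := by rw [sub_zero, abs_of_pos hr]; field_simp

theorem integral_mul_cos_sq_sub_mul_sin_sq_le {R g : ℝ → ℝ} {A B r : ℝ} (hr : 0 ≤ r)
    (hR : ContinuousOn R (Set.Icc 0 r)) (hg : ContinuousOn g (Set.Icc 0 r))
    (hRg : ∀ t ∈ Set.Icc 0 r, B + g t ≤ R t) :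
    ∫ t in 0..r, (A * cos (π * t / r) ^ 2 - R t * sin (π * t / r) ^ 2)
      ≤ (A - B) * (r / 2) - ∫ t in 0..r, g t * sin (π * t / r) ^ 2 := by
  have hcos : Continuous fun t => A * cos (π * t / r) ^ 2 := by fun_prop
  have hsin : Continuous fun t => sin (π * t / r) ^ 2 := by fun_prop
  have hBsin : Continuous fun t => B * sin (π * t / r) ^ 2 := by fun_prop
  have hcosBsin : Continuous fun t => A * cos (π * t / r) ^ 2 - B * sin (π * t / r) ^ 2 := by
    fun_prop
  have hgsin : IntervalIntegrable (fun t => g t * sin (π * t / r) ^ 2) MeasureTheory.volume 0 r :=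
    (hg.mul hsin.continuousOn).intervalIntegrable_of_Icc hr
  calc ∫ t in 0..r, (A * cos (π * t / r) ^ 2 - R t * sin (π * t / r) ^ 2)
      ≤ ∫ t in 0..r, (A * cos (π * t / r) ^ 2 - B * sin (π * t / r) ^ 2
          - g t * sin (π * t / r) ^ 2) := by
        refine integral_mono_on hr
          ((hcos.continuousOn.sub (hR.mul hsin.continuousOn)).intervalIntegrable_of_Icc hr)
          ((hcosBsin.intervalIntegrable 0 r).sub hgsin) fun t ht => ?_
        nlinarith [hRg t ht, sq_nonneg (sin (π * t / r))]
    _ = (A - B) * (r / 2) - ∫ t in 0..r, g t * sin (π * t / r) ^ 2 := by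
        rw [integral_sub (hcosBsin.intervalIntegrable 0 r) hgsin,
          integral_sub (hcos.intervalIntegrable 0 r) (hBsin.intervalIntegrable 0 r),
          integral_const_mul, integral_const_mul, integral_cos_sq_pi_mul_div,
          integral_sin_sq_pi_mul_div]
        ring

theorem mul_sq_add_two_mul_le_of_sqrt_le {m a Λ p r : ℝ} (hm : 0 < m) (ha : 0 < a)
    (hr : Λ / (a * m) + sqrt (p ^ 2 / a + Λ ^ 2 / (a ^ 2 * m ^ 2)) ≤ r) :
    m * p ^ 2 + 2 * Λ * r ≤ m * a * r ^ 2 := by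
  have hs := sq_le_sq' (by linarith [sqrt_nonneg (p ^ 2 / a + Λ ^ 2 / (a ^ 2 * m ^ 2))])
    (le_sub_iff_add_le'.2 hr)
  rw [sq_sqrt (by positivity)] at hs
  have ham : 0 < a * m := by positivity
  have hdiff : (r - Λ / (a * m)) ^ 2 - (p ^ 2 / a + Λ ^ 2 / (a ^ 2 * m ^ 2))
      = (m * a * r ^ 2 - 2 * Λ * r - m * p ^ 2) / (a * m) := by
    field_simp
    ring
  have h := sub_nonneg.2 hs
  rw [hdiff, le_div_iff₀ ham, zero_mul] at h
  linarith

theorem theorem2_analytic_core (n : ℕ) (hn : 2 ≤ n) (a Λ r : ℝ)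
    (ha : 0 < a) (hΛ : 0 ≤ Λ)
    (hr : Λ / (a * ((n : ℝ) - 1))
        + Real.sqrt (π ^ 2 / a + Λ ^ 2 / (a ^ 2 * ((n : ℝ) - 1) ^ 2)) ≤ r)
    (f f' : ℝ → ℝ)
    (hf : ∀ t ∈ Set.Icc (0 : ℝ) r, HasDerivAt f (f' t) t)
    (hf'cont : ContinuousOn f' (Set.Icc 0 r))
    (hfbound : ∀ t ∈ Set.Icc (0 : ℝ) r, |f t| ≤ Λ / π)
    (R : ℝ → ℝ) (hRcont : ContinuousOn R (Set.Icc 0 r))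
    (hRge : ∀ t ∈ Set.Icc (0 : ℝ) r, ((n : ℝ) - 1) * a + f' t ≤ R t) :
    (∫ t in (0 : ℝ)..r,
        (((n : ℝ) - 1) * (π / r) ^ 2 * Real.cos (π * t / r) ^ 2
          - R t * Real.sin (π * t / r) ^ 2)) ≤ 0 := by
  have hn' : (2 : ℝ) ≤ n := by exact_mod_cast hn
  set m : ℝ := (n : ℝ) - 1
  have hm : 0 < m := by linarith
  have hr0 : 0 < r :=
    (add_pos_of_nonneg_of_pos (by positivity) (sqrt_pos.2 (by positivity))).trans_le hr
  have hquad := mul_sq_add_two_mul_le_of_sqrt_le hm ha hr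
  have hIBP := abs_integral_deriv_mul_sin_sq_pi_mul_div_le hr0 hf
    (hf'cont.intervalIntegrable_of_Icc hr0.le) hfbound
  calc _ ≤ (m * (π / r) ^ 2 - m * a) * (r / 2) - ∫ t in 0..r, f' t * sin (π * t / r) ^ 2 :=
        integral_mul_cos_sq_sub_mul_sin_sq_le hr0.le hRcont hf'cont hRge
    _ ≤ (m * (π / r) ^ 2 - m * a) * (r / 2) + π * (Λ / π) := by linarith [(abs_le.1 hIBP).1]
    _ = (m * π ^ 2 + 2 * Λ * r - m * a * r ^ 2) / (2 * r) := by
        field_simp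
        ring
    _ ≤ 0 := div_nonpos_of_nonpos_of_nonneg (by linarith) (by positivity)
end

section
/- Let n ≥ 2 be a natural number and let R : ℝ → ℝ be continuous on [0, ∞) with lim_{T→∞} ∫₀^T R(t) dt = +∞. Then there exist real numbers b and r with 1 < b < r such that ∫₀^1 ((n−1) − t² R(t)) dt − ∫₁^b R(t) dt + ∫_b^r ( (n−1)/(r−b)² − ((r−t)²/(r−b)²) R(t) ) dt ≤ 0. -/
/-!
The primitive `G T = ∫ t in 0..T, R t` tends to `+∞`, so arbitrarily far out there is a point `b`
with `G b` as large as we please and `G b ≤ G t` for all `t ≥ b`. Then every `∫ s in b..t, R s`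
with `t ≥ b` is nonnegative, and integrating by parts against the nonincreasing weight
`(b + 1 - t)²` gives `∫ t in b..b + 1, (b + 1 - t)² * R t ≥ 0`. For `r = b + 1` the third integral
is therefore at most `n - 1`, while the second is `G b - G 1`, which outweighs everything else.
-/

open Real Filter intervalIntegral Set MeasureTheory Topology

theorem hasDerivAt_integral_of_continuousOn {E : Type*} [NormedAddCommGroup E]
    [NormedSpace ℝ E] [CompleteSpace E] {f : ℝ → E} {s : Set ℝ} {a x : ℝ}
    (hf : ContinuousOn f s) (hs : s ∈ 𝓝 x) (hint : IntervalIntegrable f volume a x) :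
    HasDerivAt (fun u => ∫ t in a..u, f t) (f x) x :=
  integral_hasDerivAt_right hint
    ((hf.mono interior_subset).stronglyMeasurableAtFilter isOpen_interior x
      (mem_interior_iff_mem_nhds.2 hs))
    (hf.continuousAt hs)

theorem integral_mul_nonneg_of_primitive_nonneg {R w w' : ℝ → ℝ} {a b : ℝ} (hab : a ≤ b)
    (hR : ContinuousOn R (Icc a b)) (hw : ContinuousOn w (Icc a b))
    (hw' : ∀ x ∈ Ioo a b, HasDerivAt w (w' x) x) (hw'int : IntervalIntegrable w' volume a b)
    (hw'_nonpos : ∀ x ∈ Ioo a b, w' x ≤ 0) (hwb : 0 ≤ w b)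
    (hprim : ∀ t ∈ Icc a b, 0 ≤ ∫ s in a..t, R s) :
    0 ≤ ∫ t in a..b, w t * R t := by
  have hIcc : uIcc a b = Icc a b := uIcc_of_le hab
  have hRint : IntervalIntegrable R volume a b := (hR.mono hIcc.le).intervalIntegrable
  have hF : ContinuousOn (fun u => ∫ s in a..u, R s) (Icc a b) :=
    hIcc ▸ continuousOn_primitive_interval' hRint left_mem_uIcc
  have hF' : ∀ x ∈ Ioo a b, HasDerivAt (fun u => ∫ s in a..u, R s) (R x) x := fun x hx =>
    hasDerivAt_integral_of_continuousOn hR (Icc_mem_nhds hx.1 hx.2)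
      (hRint.mono_set (by rw [hIcc, uIcc_of_le hx.1.le]; exact Icc_subset_Icc_right hx.2.le))
  rw [integral_mul_deriv_eq_deriv_mul_of_hasDerivAt (hIcc ▸ hw) (hIcc ▸ hF)
    (by simpa [hab] using hw') (by simpa [hab] using hF') hw'int hRint, integral_same, mul_zero,
    sub_zero]
  have hboundary : 0 ≤ w b * ∫ s in a..b, R s := mul_nonneg hwb (hprim b ⟨hab, le_rfl⟩)
  have hbulk : ∫ x in a..b, w' x * (∫ s in a..x, R s) ≤ 0 :=
    (integral_mono_on_of_le_Ioo hab (hw'int.mul_continuousOn (hIcc ▸ hF))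
      intervalIntegrable_const fun x hx => mul_nonpos_of_nonpos_of_nonneg (hw'_nonpos x hx)
        (hprim x (Ioo_subset_Icc_self hx))).trans_eq intervalIntegral.integral_zero
  linarith

theorem integral_linear_cutoff_le_of_primitive_nonneg {R : ℝ → ℝ} {b r : ℝ} (c : ℝ) (hbr : b < r)
    (hR : ContinuousOn R (Icc b r)) (hprim : ∀ t ∈ Icc b r, 0 ≤ ∫ s in b..t, R s) :
    ∫ t in b..r, (c / (r - b) ^ 2 - (r - t) ^ 2 / (r - b) ^ 2 * R t) ≤ c / (r - b) := by
  have hweight : 0 ≤ ∫ t in b..r, (r - t) ^ 2 * R t :=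
    integral_mul_nonneg_of_primitive_nonneg (w' := fun x => -(2 * (r - x))) hbr.le hR
      (by fun_prop) (fun x _ => by simpa using ((hasDerivAt_id x).const_sub r).fun_pow 2)
      ((by fun_prop : Continuous _).intervalIntegrable _ _)
      (fun x hx => by linarith [hx.2]) (by simp) hprim
  have hint : IntervalIntegrable (fun t => (r - t) ^ 2 * R t) volume b r :=
    (hR.mono (uIcc_of_le hbr.le).le).intervalIntegrable.continuousOn_mul (by fun_prop)
  calc ∫ t in b..r, (c / (r - b) ^ 2 - (r - t) ^ 2 / (r - b) ^ 2 * R t)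
      = ∫ t in b..r, (c - (r - t) ^ 2 * R t) / (r - b) ^ 2 := by
        congr 1; ext t; ring
    _ = ((r - b) * c - ∫ t in b..r, (r - t) ^ 2 * R t) / (r - b) ^ 2 := by
        rw [intervalIntegral.integral_div, integral_sub intervalIntegrable_const hint,
          intervalIntegral.integral_const, smul_eq_mul]
    _ ≤ (r - b) * c / (r - b) ^ 2 := by gcongr; linarith
    _ = c / (r - b) := by rw [sq, mul_div_mul_left _ _ (sub_ne_zero.2 hbr.ne')]

theorem exists_ge_forall_ge_le_of_tendsto_atTop {α β : Type*} [LinearOrder α]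
    [TopologicalSpace α] [ClosedIicTopology α] [LinearOrder β] [TopologicalSpace β]
    [CompactIccSpace β] {G : β → α} {c : β} (hG : ContinuousOn G (Ici c))
    (hlim : Tendsto G atTop atTop) : ∃ b, c ≤ b ∧ ∀ t, b ≤ t → G b ≤ G t := by
  have : Nonempty β := ⟨c⟩
  obtain ⟨K, hK⟩ := (hlim.eventually_ge_atTop (G c)).exists_forall_of_atTop
  obtain ⟨b, hb, hbmin⟩ := isCompact_Icc.exists_isMinOn (nonempty_Icc.2 (le_max_left c K))
    (hG.mono Icc_subset_Ici_self)
  refine ⟨b, hb.1, fun t hbt => ?_⟩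
  rcases le_total t (max c K) with htK | hKt
  · exact hbmin ⟨hb.1.trans hbt, htK⟩
  · exact (hbmin ⟨le_rfl, le_max_left c K⟩).trans (hK t ((le_max_right c K).trans hKt))

theorem theoremB_analytic_core_general (n : ℕ) (R : ℝ → ℝ)
    (hRcont : ContinuousOn R (Set.Ici 0))
    (hRdiv : Tendsto (fun T : ℝ => ∫ t in (0 : ℝ)..T, R t) atTop atTop) :
    ∃ b r : ℝ, 1 < b ∧ b < r ∧
      (∫ t in (0 : ℝ)..1, (((n : ℝ) - 1) - t ^ 2 * R t))
        - (∫ t in (1 : ℝ)..b, R t)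
        + (∫ t in b..r,
            (((n : ℝ) - 1) / (r - b) ^ 2 - (r - t) ^ 2 / (r - b) ^ 2 * R t))
      ≤ 0 := by
  set G : ℝ → ℝ := fun T => ∫ t in (0 : ℝ)..T, R t
  have hint : ∀ p q : ℝ, 0 ≤ p → 0 ≤ q → IntervalIntegrable R volume p q := fun p q hp hq =>
    (hRcont.mono fun x hx => (le_min hp hq).trans hx.1).intervalIntegrable
  have hGcont : ContinuousOn G (Ioi 0) := fun x hx =>
    (hasDerivAt_integral_of_continuousOn hRcont (Ici_mem_nhds hx)
      (hint 0 x le_rfl hx.le)).continuousAt.continuousWithinAt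
  obtain ⟨c, hc⟩ := Eventually.exists_forall_of_atTop <| hRdiv.eventually_ge_atTop
    ((∫ t in (0 : ℝ)..1, (((n : ℝ) - 1) - t ^ 2 * R t)) + G 1 + ((n : ℝ) - 1))
  obtain ⟨b, hcb, hbmin⟩ := exists_ge_forall_ge_le_of_tendsto_atTop
    (hGcont.mono fun x hx => two_pos.trans_le ((le_max_right c 2).trans hx)) hRdiv
  have hb : 1 < b := one_lt_two.trans_le ((le_max_right c 2).trans hcb)
  have hprim : ∀ t ∈ Icc b (b + 1), 0 ≤ ∫ s in b..t, R s := fun t ht => by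
    rw [← integral_interval_sub_left (hint 0 t le_rfl (by linarith [ht.1]))
      (hint 0 b le_rfl (by linarith))]
    exact sub_nonneg.2 (hbmin t ht.1)
  have htail := integral_linear_cutoff_le_of_primitive_nonneg ((n : ℝ) - 1) (lt_add_one b)
    (hRcont.mono fun x hx => mem_Ici.2 (by linarith [hx.1])) hprim
  refine ⟨b, b + 1, hb, lt_add_one b, ?_⟩
  simp only [add_sub_cancel_left, one_pow, div_one] at htail ⊢
  rw [← integral_interval_sub_left (hint 0 b le_rfl (by linarith)) (hint 0 1 le_rfl zero_le_one)]
  linarith [hc b ((le_max_left c 2).trans hcb)]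

theorem theoremB_analytic_core (n : ℕ) (hn : 2 ≤ n) (R : ℝ → ℝ)
    (hRcont : ContinuousOn R (Set.Ici 0))
    (hRdiv : Tendsto (fun T : ℝ => ∫ t in (0 : ℝ)..T, R t) atTop atTop) :
    ∃ b r : ℝ, 1 < b ∧ b < r ∧
      (∫ t in (0 : ℝ)..1, (((n : ℝ) - 1) - t ^ 2 * R t))
        - (∫ t in (1 : ℝ)..b, R t)
        + (∫ t in b..r,
            (((n : ℝ) - 1) / (r - b) ^ 2 - (r - t) ^ 2 / (r - b) ^ 2 * R t))
      ≤ 0 :=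
  theoremB_analytic_core_general n R hRcont hRdiv
end
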